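/- In the polynomial ring $\mathbb{Z}[x,y,e_0,e_1,e_2,e_3,e_4,a_1,a_{2,1},a_{3,2},a_{4,3},a_{6,5}]$, the composite toric substitution $x \mapsto e_1e_4e_2^2e_3^2\,x$, $y \mapsto e_1e_4^2e_2^2e_3^3\,y$, $e_0 \mapsto e_0e_1e_2e_3e_4$ applied to $F = y^2 + a_1xy + a_{3,2}e_0^2y - x^3 - a_{2,1}e_0x^2 - a_{4,3}e_0^3x - a_{6,5}e_0^5$ yields the identity $F(e_1e_4e_2^2e_3^2x,\ e_1e_4^2e_2^2e_3^3y,\ e_0e_1e_2e_3e_4) = e_1^2e_2^4e_3^5e_4^3\,\big[\,y(e_3e_4y + a_1x + a_{3,2}e_0^2e_1e_4) - e_1e_2(e_2e_3x^3 + a_{2,1}e_0x^2 + a_{4,3}e_0^3e_1e_4x + a_{6,5}e_0^5e_1^2e_4^2)\,\big]$, whose bracketed factor is the common defining equation $\mathscr{E}_T$ of the toric resolutions of type I, II and III. -/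
import Mathlib


open MvPolynomial

namespace SU5Toric

/-- The defining polynomial of the `SU(5)` Weierstrass model `𝓔₀`, as a function of the
coordinates and coefficients. -/
def F {R : Type*} [CommRing R] (x y e0 a1 a21 a32 a43 a65 : R) : R :=
  y ^ 2 + a1 * x * y + a32 * e0 ^ 2 * y
    - x ^ 3 - a21 * e0 * x ^ 2 - a43 * e0 ^ 3 * x - a65 * e0 ^ 5

/-- Variables of `ℤ[x, y, e₀, e₁, e₂, e₃, e₄, a₁, a₂₁, a₃₂, a₄₃, a₆₅]` indexed by `Fin 12`. -/
noncomputable abbrev R12 : Type := MvPolynomial (Fin 12) ℤ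

noncomputable def x : R12 := X 0
noncomputable def y : R12 := X 1
noncomputable def e0 : R12 := X 2
noncomputable def e1 : R12 := X 3
noncomputable def e2 : R12 := X 4
noncomputable def e3 : R12 := X 5
noncomputable def e4 : R12 := X 6
noncomputable def a1 : R12 := X 7
noncomputable def a21 : R12 := X 8
noncomputable def a32 : R12 := X 9
noncomputable def a43 : R12 := X 10
noncomputable def a65 : R12 := X 11

/-- The composite toric substitution `x ↦ e₁e₄e₂²e₃²x`, `y ↦ e₁e₄²e₂²e₃³y`,
`e₀ ↦ e₀e₁e₂e₃e₄` applied to `F` yields `e₁²e₂⁴e₃⁵e₄³` times the common defining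
equation `𝓔_T` of the toric resolutions of type I, II and III. -/
theorem toric_total_transform :
    F (e1 * e4 * e2 ^ 2 * e3 ^ 2 * x) (e1 * e4 ^ 2 * e2 ^ 2 * e3 ^ 3 * y)
        (e0 * e1 * e2 * e3 * e4) a1 a21 a32 a43 a65
      = e1 ^ 2 * e2 ^ 4 * e3 ^ 5 * e4 ^ 3
          * (y * (e3 * e4 * y + a1 * x + a32 * e0 ^ 2 * e1 * e4)
            - e1 * e2 * (e2 * e3 * x ^ 3 + a21 * e0 * x ^ 2
                + a43 * e0 ^ 3 * e1 * e4 * x + a65 * e0 ^ 5 * e1 ^ 2 * e4 ^ 2)) := by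
  unfold F; ring

end SU5Toric
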